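/- Let f be a nonzero multilinear polynomial of degree 3 over ℂ, f = Σ_{σ∈S₃} a_σ x_{σ(1)}x_{σ(2)}x_{σ(3)}, and let d ≥ 2. Then the image of f on M_d(ℂ)³ contains every trace-zero matrix: M_d(ℂ) ∩ ker Tr ⊆ {f(A,B,C) : A,B,C ∈ M_d(ℂ)}. -/

import Mathlib

/-!
If the coefficients have nonzero sum `s`, then `f(s⁻¹ D, 1, 1) = D`. Otherwise we first conjugate
`D` to a matrix with zero diagonal: a traceless non-scalar matrix has a vector `v` with `v, Dv`
independent, and in a basis starting with `v` the first diagonal entry vanishes; induct on the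
complementary block. For diagonal `A = diag x`, `B = diag y` the polynomial acts entrywise,
`f(A, B, C)ᵢⱼ = wᵢⱼ Cᵢⱼ`, where `wᵢᵢ = s xᵢ yᵢ = 0`; choosing `x, y ∈ {1, t}` with distinct `tᵢ`
makes every off-diagonal weight nonzero, unless `f = a [A, B] C + b C [A, B]`, in which case the
same works after exchanging the roles of `B` and `C`.
-/

open Matrix

theorem Matrix.trace_reindex {R ι κ : Type*} [AddCommMonoid R] [Fintype ι] [Fintype κ]
    (e : ι ≃ κ) (D : Matrix ι ι R) : (reindex e e D).trace = D.trace := by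
  simp [trace, e.symm.sum_comp (fun i => D i i)]

theorem Module.Basis.sumExtend_apply_inl {ι K V : Type*} [DivisionRing K] [AddCommGroup V]
    [Module K V] {v : ι → V} (hs : LinearIndependent K v) (i : ι) :
    sumExtend hs (.inl i) = v i := by
  simp only [sumExtend, Equiv.trans_def, coe_reindex, coe_extend, Function.comp_apply]
  rfl

section
variable {K ι : Type*} [Field K] [Fintype ι] [DecidableEq ι]

theorem Matrix.exists_units_conj_apply_eq_zero_of_ne_scalar
    {D : Matrix ι ι K} (hD : ∀ c : K, D ≠ scalar ι c) (i₀ : ι) :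
    ∃ P : (Matrix ι ι K)ˣ, ((P : Matrix ι ι K) * D * (↑P⁻¹ : Matrix ι ι K)) i₀ i₀ = 0 := by
  obtain ⟨v, hv⟩ : ∃ v : ι → K, LinearIndependent K ![v, D *ᵥ v] := by
    by_contra! h
    obtain ⟨c, hc⟩ := LinearMap.exists_eq_smul_id_of_forall_notLinearIndependent (f := toLin' D) h
    refine hD c (toLin'.injective ?_)
    rw [hc]
    ext
    simp [Pi.single_apply]
  let b₀ := Module.Basis.sumExtend hv
  obtain ⟨e, he⟩ : ∃ e : (Fin 2 ⊕ _) ≃ ι, e (.inl 0) = i₀ :=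
    let e₀ := b₀.indexEquiv (Pi.basisFun K ι)
    ⟨e₀.trans (Equiv.swap (e₀ (.inl 0)) i₀), by simp⟩
  let b := b₀.reindex e
  have hb : b i₀ = v := by simp [b, b₀, ← he, Module.Basis.sumExtend_apply_inl]
  have hDv : b.repr (D *ᵥ v) i₀ = 0 := by
    have : b₀ (.inl 1) = D *ᵥ v := Module.Basis.sumExtend_apply_inl hv 1
    simp [b, ← he, ← this]
  have hcol : (D * (Pi.basisFun K ι).toMatrix b).col i₀ = D *ᵥ v := by
    ext; simp [← hb, mul_apply, mulVec, dotProduct, Module.Basis.toMatrix_apply]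
  refine ⟨⟨b.toMatrix (Pi.basisFun K ι), (Pi.basisFun K ι).toMatrix b,
    b.toMatrix_mul_toMatrix_flip _, Module.Basis.toMatrix_mul_toMatrix_flip _ _⟩, ?_⟩
  rw [Matrix.mul_assoc, basis_toMatrix_basisFun_mul]
  simpa [hcol] using hDv

theorem Matrix.exists_units_conj_apply_eq_zero_of_trace_eq_zero [CharZero K]
    {D : Matrix ι ι K} (hD : D.trace = 0) (i₀ : ι) :
    ∃ P : (Matrix ι ι K)ˣ, ((P : Matrix ι ι K) * D * (↑P⁻¹ : Matrix ι ι K)) i₀ i₀ = 0 := by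
  by_cases hscalar : ∃ c, D = scalar ι c
  · obtain ⟨c, rfl⟩ := hscalar
    have : Nonempty ι := ⟨i₀⟩
    have hc : c = 0 := by simpa [Fintype.card_ne_zero] using hD
    exact ⟨1, by simp [hc]⟩
  · push Not at hscalar
    exact exists_units_conj_apply_eq_zero_of_ne_scalar hscalar i₀

def Matrix.HasConjZeroDiag (D : Matrix ι ι K) : Prop :=
  ∃ P : (Matrix ι ι K)ˣ, ∀ i, ((P : Matrix ι ι K) * D * (↑P⁻¹ : Matrix ι ι K)) i i = 0

theorem Matrix.HasConjZeroDiag.reindex {κ : Type*} [Fintype κ] [DecidableEq κ] (e : ι ≃ κ)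
    {D : Matrix ι ι K} (h : D.HasConjZeroDiag) : (reindex e e D).HasConjZeroDiag := by
  obtain ⟨P, hP⟩ := h
  refine ⟨Units.map (reindexAlgEquiv K K e).toMonoidHom P, fun i => ?_⟩
  simpa [← map_mul] using hP (e.symm i)

theorem Matrix.hasConjZeroDiag_of_sum_unit [CharZero K] {α : Type*} [Fintype α] [DecidableEq α]
    (ih : ∀ A : Matrix α α K, A.trace = 0 → A.HasConjZeroDiag)
    {D : Matrix (α ⊕ Unit) (α ⊕ Unit) K} (hD : D.trace = 0) : D.HasConjZeroDiag := by
  obtain ⟨P, hP⟩ := exists_units_conj_apply_eq_zero_of_trace_eq_zero hD (.inr ())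
  set D₁ := (P : Matrix _ _ K) * D * (↑P⁻¹ : Matrix _ _ K) with hD₁
  have htr : D₁.toBlocks₁₁.trace = 0 := by
    have := trace_units_conj P D
    rw [hD, ← hD₁] at this
    simpa [trace, Fintype.sum_sum_type, toBlocks₁₁, hP] using this
  obtain ⟨Q, hQ⟩ := ih _ htr
  let R : (Matrix (α ⊕ Unit) (α ⊕ Unit) K)ˣ :=
    ⟨fromBlocks Q 0 0 1, fromBlocks ↑Q⁻¹ 0 0 1, by simp [fromBlocks_multiply],
      by simp [fromBlocks_multiply]⟩
  refine ⟨R * P, ?_⟩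
  have hRP : ((R * P : (Matrix _ _ K)ˣ) : Matrix _ _ K) * D * (↑(R * P)⁻¹ : Matrix _ _ K)
      = (R : Matrix _ _ K) * D₁ * (↑R⁻¹ : Matrix _ _ K) := by
    simp [hD₁, Matrix.mul_assoc]
  rw [hRP, ← fromBlocks_toBlocks D₁]
  rintro (i | ⟨⟩)
  · simpa [R, fromBlocks_multiply, Matrix.mul_assoc] using hQ i
  · simpa [R, fromBlocks_multiply, toBlocks₂₂] using hP

theorem Matrix.hasConjZeroDiag_of_trace_eq_zero [CharZero K] {D : Matrix ι ι K}
    (hD : D.trace = 0) : D.HasConjZeroDiag := by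
  refine Fintype.induction_empty_option
    (P := fun α _ => ∀ [DecidableEq α] (D : Matrix α α K), D.trace = 0 → D.HasConjZeroDiag)
    ?_ ?_ ?_ ι D hD
  · intro α β _ e ih _ D hD
    let _ : Fintype α := Fintype.ofEquiv β e.symm
    classical
    rw [← (reindex e e).apply_symm_apply D] at hD ⊢
    rw [trace_reindex] at hD
    exact (ih _ hD).reindex e
  · intro _ D _
    exact ⟨1, fun i => i.elim⟩
  · intro α _ ih _ D hD
    classical
    let e : Option α ≃ α ⊕ Unit := Equiv.optionEquivSumPUnit α
    rw [← (reindex e.symm e.symm).apply_symm_apply D] at hD ⊢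
    rw [trace_reindex] at hD
    exact (hasConjZeroDiag_of_sum_unit (ih · ·) hD).reindex e.symm

end

def multilinearCubic {R A : Type*} [CommSemiring R] [Semiring A] [Algebra R A]
    (a123 a132 a213 a231 a312 a321 : R) (X Y Z : A) : A :=
  a123 • (X * Y * Z) + a132 • (X * Z * Y) + a213 • (Y * X * Z) +
    a231 • (Y * Z * X) + a312 • (Z * X * Y) + a321 • (Z * Y * X)

section
variable {R A B : Type*} [CommSemiring R] [Semiring A] [Algebra R A] [Semiring B] [Algebra R B]
  (a123 a132 a213 a231 a312 a321 : R)

theorem map_multilinearCubic {F : Type*} [FunLike F A B] [AlgHomClass F R A B] (φ : F)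
    (X Y Z : A) :
    φ (multilinearCubic a123 a132 a213 a231 a312 a321 X Y Z) =
      multilinearCubic a123 a132 a213 a231 a312 a321 (φ X) (φ Y) (φ Z) := by
  simp [multilinearCubic]

theorem multilinearCubic_swap (X Y Z : A) :
    multilinearCubic a123 a132 a213 a231 a312 a321 X Y Z =
      multilinearCubic a132 a123 a312 a321 a213 a231 X Z Y := by
  simp only [multilinearCubic]
  abel

theorem multilinearCubic_one_one (X : A) :
    multilinearCubic a123 a132 a213 a231 a312 a321 X 1 1 =
      (a123 + a132 + a213 + a231 + a312 + a321) • X := by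
  simp only [multilinearCubic, mul_one, one_mul, add_smul]

end

section
variable {K ι : Type*} [Field K] (a123 a132 a213 a231 a312 a321 : K)

def multilinearCubicSymbol (x y : ι → K) : Matrix ι ι K :=
  of fun i j => (a123 + a213) * x i * y i + a132 * x i * y j + a231 * x j * y i +
    (a312 + a321) * x j * y j

theorem multilinearCubic_diagonal_diagonal [Fintype ι] [DecidableEq ι] (x y : ι → K)
    (C : Matrix ι ι K) :
    multilinearCubic a123 a132 a213 a231 a312 a321 (diagonal x) (diagonal y) C =
      multilinearCubicSymbol a123 a132 a213 a231 a312 a321 x y ⊙ C := by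
  ext i j
  simp only [multilinearCubic, diagonal_mul_diagonal, Matrix.add_apply, Matrix.smul_apply,
    diagonal_mul, smul_eq_mul, mul_diagonal, multilinearCubicSymbol, hadamard_apply, of_apply]
  ring

variable {a123 a132 a213 a231 a312 a321}

theorem exists_multilinearCubicSymbol_ne_zero
    (hs : a123 + a132 + a213 + a231 + a312 + a321 = 0)
    (ha : ¬(a123 + a213 + a231 = 0 ∧ a123 + a213 + a132 = 0 ∧ a123 + a213 = 0)) (t : ι ↪ K) :
    ∃ x y : ι → K, ∀ i j, i ≠ j →
      multilinearCubicSymbol a123 a132 a213 a231 a312 a321 x y i j ≠ 0 := by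
  have ht : ∀ i j, i ≠ j → t i - t j ≠ 0 := fun i j hij => sub_ne_zero.2 (t.injective.ne hij)
  by_cases h₁ : a123 + a213 + a231 = 0
  · by_cases h₂ : a123 + a213 + a132 = 0
    · refine ⟨t, t, fun i j hij => ?_⟩
      have h₃ : a123 + a213 ≠ 0 := fun h₃ => ha ⟨h₁, h₂, h₃⟩
      convert mul_ne_zero h₃ (pow_ne_zero 2 (ht i j hij)) using 1
      simp only [multilinearCubicSymbol, of_apply]
      linear_combination (t i * t j - t j * t j) * (h₁ + h₂) + t j * t j * hs
    · refine ⟨t, fun _ => 1, fun i j hij => ?_⟩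
      convert mul_ne_zero h₂ (ht i j hij) using 1
      simp only [multilinearCubicSymbol, of_apply]
      linear_combination t j * hs
  · refine ⟨fun _ => 1, t, fun i j hij => ?_⟩
    convert mul_ne_zero h₁ (ht i j hij) using 1
    simp only [multilinearCubicSymbol, of_apply]
    linear_combination t j * hs

theorem Matrix.exists_hadamard_eq {W Z : Matrix ι ι K} (hW : ∀ i j, i ≠ j → W i j ≠ 0)
    (hZ : ∀ i, Z i i = 0) : ∃ C, W ⊙ C = Z := by
  refine ⟨of fun i j => Z i j / W i j, ?_⟩
  ext i j
  rcases eq_or_ne i j with rfl | hij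
  · simp [hZ]
  · simp [mul_div_cancel₀ _ (hW i j hij)]

theorem exists_multilinearCubic_eq_of_diag_eq_zero [Fintype ι] [DecidableEq ι]
    (hs : a123 + a132 + a213 + a231 + a312 + a321 = 0)
    (hne : ¬(a123 = 0 ∧ a132 = 0 ∧ a213 = 0 ∧ a231 = 0 ∧ a312 = 0 ∧ a321 = 0)) (t : ι ↪ K)
    {Z : Matrix ι ι K} (hZ : ∀ i, Z i i = 0) :
    ∃ X Y W, multilinearCubic a123 a132 a213 a231 a312 a321 X Y W = Z := by
  by_cases h : a123 + a213 + a231 = 0 ∧ a123 + a213 + a132 = 0 ∧ a123 + a213 = 0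
  -- Here `f = a123 [X, Y] W + a312 W [X, Y]` vanishes on diagonal `X, Y`: exchange `Y` and `W`.
  · obtain ⟨h₁, h₂, h₃⟩ := h
    have ha : ¬(a132 + a312 + a321 = 0 ∧ a132 + a312 + a123 = 0 ∧ a132 + a312 = 0) := by
      rintro ⟨g₁, g₂, g₃⟩
      refine hne ⟨?_, ?_, ?_, ?_, ?_, ?_⟩
      · linear_combination g₂ - g₃
      · linear_combination h₂ - h₃
      · linear_combination h₃ - g₂ + g₃
      · linear_combination h₁ - h₃
      · linear_combination g₃ - h₂ + h₃
      · linear_combination g₁ - g₃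
    obtain ⟨x, y, hxy⟩ := exists_multilinearCubicSymbol_ne_zero (a123 := a132) (a132 := a123)
      (a213 := a312) (a231 := a321) (a312 := a213) (a321 := a231) (by linear_combination hs) ha t
    obtain ⟨C, hC⟩ := exists_hadamard_eq hxy hZ
    exact ⟨diagonal x, C, diagonal y, by
      rw [multilinearCubic_swap, multilinearCubic_diagonal_diagonal, hC]⟩
  · obtain ⟨x, y, hxy⟩ := exists_multilinearCubicSymbol_ne_zero hs h t
    obtain ⟨C, hC⟩ := exists_hadamard_eq hxy hZ
    exact ⟨diagonal x, diagonal y, C, by rw [multilinearCubic_diagonal_diagonal, hC]⟩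

end

theorem image_contains_traceless_general (d : ℕ)
    (a123 a132 a213 a231 a312 a321 : ℂ)
    (hne : ¬(a123 = 0 ∧ a132 = 0 ∧ a213 = 0 ∧ a231 = 0 ∧ a312 = 0 ∧ a321 = 0)) :
    ∀ D : Matrix (Fin d) (Fin d) ℂ, Matrix.trace D = 0 →
      ∃ A B C : Matrix (Fin d) (Fin d) ℂ,
        a123 • (A * B * C) + a132 • (A * C * B) + a213 • (B * A * C) +
          a231 • (B * C * A) + a312 • (C * A * B) + a321 • (C * B * A) = D := by
  intro D hD
  change ∃ A B C, multilinearCubic a123 a132 a213 a231 a312 a321 A B C = D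
  by_cases hs : a123 + a132 + a213 + a231 + a312 + a321 = 0
  · obtain ⟨P, hP⟩ := hasConjZeroDiag_of_trace_eq_zero hD
    obtain ⟨A, B, C, hABC⟩ := exists_multilinearCubic_eq_of_diag_eq_zero hs hne
      (Fin.valEmbedding.trans Nat.castEmbedding) hP
    let φ := MulSemiringAction.toAlgEquiv ℂ (Matrix (Fin d) (Fin d) ℂ) (ConjAct.toConjAct P⁻¹)
    refine ⟨φ A, φ B, φ C, ?_⟩
    rw [← map_multilinearCubic, hABC]
    simp [φ, ConjAct.units_smul_def, Matrix.mul_assoc]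
  · exact ⟨(a123 + a132 + a213 + a231 + a312 + a321)⁻¹ • D, 1, 1, by
      rw [multilinearCubic_one_one, smul_smul, mul_inv_cancel₀ hs, one_smul]⟩

/-- Mesyan: the image on `M_d(ℂ)` of a nonzero multilinear degree-3
polynomial contains every trace-zero matrix. -/
theorem image_contains_traceless (d : ℕ) (hd : 2 ≤ d)
    (a123 a132 a213 a231 a312 a321 : ℂ)
    (hne : ¬(a123 = 0 ∧ a132 = 0 ∧ a213 = 0 ∧ a231 = 0 ∧ a312 = 0 ∧ a321 = 0)) :
    ∀ D : Matrix (Fin d) (Fin d) ℂ, Matrix.trace D = 0 →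
      ∃ A B C : Matrix (Fin d) (Fin d) ℂ,
        a123 • (A * B * C) + a132 • (A * C * B) + a213 • (B * A * C) +
          a231 • (B * C * A) + a312 • (C * A * B) + a321 • (C * B * A) = D :=
  image_contains_traceless_general d a123 a132 a213 a231 a312 a321 hne
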